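/- arXiv:2401.11309 — 2 statements merged into one kernel-verified Lean document; each statement's English description precedes it below -/
import Mathlib

section
/- Let d ≥ 2 be an integer and a a nonzero rational number. Then ψ_{d,a,−1} has no rational periodic cycle of length at least 2; that is, every point of ℙ¹(ℚ) that is periodic under ψ_{d,a,−1} is a fixed point. -/
/-- The map `ψ_{d,a,b} : ℙ¹(ℚ) → ℙ¹(ℚ)`, with `ℙ¹(ℚ)` modeled as `Option ℚ`
(`some z` is the affine point `z`, and `none` is the point at infinity `[1 : 0]`).
In homogeneous coordinates the map is `[X : Y] ↦ [X·Y^{d−1} : a·X^d + b·Y^d]`;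
on the affine chart it is `z ↦ z / (a·z^d + b)`, the point at infinity mapping to `0`. -/
def psi (d : ℕ) (a b : ℚ) : Option ℚ → Option ℚ
  | none => some 0
  | some z => if a * z ^ d + b = 0 then none else some (z / (a * z ^ d + b))

/-!
Write a periodic orbit that avoids the fixed point `0` (hence also `∞` and the poles) as `y_k`,
and put `t_k = a·y_k^d`, so that `t_{k+1} = t_k / (t_k - 1)^d`. For a prime `p` let
`v_k = v_p(t_k)`; then `v_{k+1} = v_k - d·v_p(t_k - 1)`. A negative `v_k` gives
`v_{k+1} = (1 - d)·v_k > 0`, and a positive valuation never changes again, contradicting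
periodicity. So every `v_k ≥ 0`, hence `v_p(t_k - 1) ≥ 0` and the periodic sequence `v` is
antitone, thus constant, and `v_p(t_k - 1) = 0`. This holds for all `p`, so `t_k - 1 = ±1`,
and `t_k ≠ 0` forces `t_k = 2`: the denominator `a·y_k^d - 1` is `1` and `y_k` is fixed.
-/

open Function

namespace Function

theorem IsPeriodicPt.eq_of_iterate_eq {α : Type*} {f : α → α} {n m : ℕ} {x z : α}
    (hx : IsPeriodicPt f n x) (hn : 0 < n) (hz : IsFixedPt f z) (h : f^[m] x = z) : x = z := by
  induction m generalizing x with
  | zero => exact h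
  | succ m ih =>
    have hfx : f x = f z := by rw [ih hx.apply h, hz.eq]
    exact hx.eq_of_apply_eq_same (hz.isPeriodicPt n) hn hfx

namespace Periodic

variable {α : Type*} {x : ℕ → α} {n : ℕ}

theorem forall_of_invariant (hx : Periodic x n) (hn : 0 < n) {P : α → Prop}
    (hP : ∀ k, P (x k) → P (x (k + 1))) {k : ℕ} (hk : P (x k)) (j : ℕ) : P (x j) := by
  have hfwd : ∀ m, P (x (k + m)) := fun m => Nat.rec hk (fun m ih => hP _ ih) m
  have hk_le : k ≤ j + k * n := le_add_left (Nat.le_mul_of_pos_right k hn)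
  have hxj : x (j + k * n) = x j := by simpa using hx.nat_mul k j
  rw [← hxj, ← Nat.add_sub_cancel' hk_le]
  exact hfwd _

theorem succ_eq_of_antitone [PartialOrder α] (hx : Periodic x n) (hn : 0 < n) (hanti : Antitone x)
    (k : ℕ) : x (k + 1) = x k :=
  le_antisymm (hanti k.le_succ) <| calc
    x k = x (k + n) := (hx k).symm
    _ ≤ x (k + 1) := hanti (by omega)

end Periodic

end Function

theorem Rat.eq_one_or_eq_neg_one_of_forall_padicValRat_eq_zero {q : ℚ} (hq : q ≠ 0)
    (h : ∀ p, p.Prime → padicValRat p q = 0) : q = 1 ∨ q = -1 := by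
  have hcoprime : ∀ p, p.Prime → ¬ p ∣ q.num.natAbs ∧ ¬ p ∣ q.den := by
    intro p hp
    have := Fact.mk hp
    have hval : padicValNat p q.num.natAbs = padicValNat p q.den := by
      have := h p hp
      rw [padicValRat_def, padicValInt] at this
      omega
    have hiff : p ∣ q.num.natAbs ↔ p ∣ q.den := by
      rw [dvd_iff_padicValNat_ne_zero (by simpa using hq), dvd_iff_padicValNat_ne_zero q.den_ne_zero,
        hval]
    have hnot : ¬ (p ∣ q.num.natAbs ∧ p ∣ q.den) := fun ⟨hnum, hden⟩ =>
      hp.one_lt.ne' ((Nat.Coprime.coprime_dvd_left hnum q.reduced).eq_one_of_dvd hden)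
    tauto
  have hden : q.den = 1 := Nat.eq_one_iff_not_exists_prime_dvd.2 fun p hp => (hcoprime p hp).2
  have hnum : q.num.natAbs = 1 := Nat.eq_one_iff_not_exists_prime_dvd.2 fun p hp => (hcoprime p hp).1
  rw [← Rat.coe_int_num_of_den_eq_one hden]
  rcases Int.natAbs_eq_iff.1 hnum with h1 | h1 <;> simp [h1]

section PadicValRatSubOne

variable {p : ℕ} [Fact p.Prime] {t : ℚ}

theorem padicValRat_sub_one_of_neg (h : padicValRat p t < 0) :
    padicValRat p (t - 1) = padicValRat p t := by
  have ht0 : t ≠ 0 := by rintro rfl; simp at h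
  have ht1 : t + -1 ≠ 0 := by rintro h1; rw [add_neg_eq_zero.1 h1] at h; simp at h
  rw [sub_eq_add_neg, padicValRat.add_eq_of_lt ht1 ht0 (by norm_num) (by simpa using h)]

theorem padicValRat_sub_one_of_pos (h : 0 < padicValRat p t) : padicValRat p (t - 1) = 0 := by
  have ht1 : -1 + t ≠ 0 := by rintro h1; rw [← neg_add_eq_zero.1 h1] at h; simp at h
  rw [sub_eq_neg_add, padicValRat.add_eq_of_lt ht1 (by norm_num) (by rintro rfl; simp at h)
    (by simpa using h), padicValRat.neg, padicValRat.one]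

theorem padicValRat_sub_one_nonneg (h : 0 ≤ padicValRat p t) (ht1 : t ≠ 1) :
    0 ≤ padicValRat p (t - 1) := by
  have hmin := padicValRat.min_le_padicValRat_add (p := p) (q := t) (r := -1)
    (by rwa [← sub_eq_add_neg, sub_ne_zero])
  rw [padicValRat.neg, padicValRat.one, min_eq_right h] at hmin
  rwa [sub_eq_add_neg]

theorem padicValRat_div_sub_one_pow (ht0 : t ≠ 0) (ht1 : t ≠ 1) (d : ℕ) :
    padicValRat p (t / (t - 1) ^ d) = padicValRat p t - d * padicValRat p (t - 1) := by
  rw [padicValRat.div ht0 (pow_ne_zero _ (sub_ne_zero.2 ht1)), padicValRat.pow]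

end PadicValRatSubOne

section Cycle

variable {d n : ℕ} {t : ℕ → ℚ}

theorem padicValRat_sub_one_eq_zero_of_periodic (p : ℕ) [Fact p.Prime] (hd : 2 ≤ d) (hn : 0 < n)
    (ht0 : ∀ k, t k ≠ 0) (ht1 : ∀ k, t k ≠ 1) (hrec : ∀ k, t (k + 1) = t k / (t k - 1) ^ d)
    (hper : Periodic t n) (k : ℕ) : padicValRat p (t k - 1) = 0 := by
  set v : ℕ → ℤ := fun k => padicValRat p (t k) with hv
  have hstep (k : ℕ) : v (k + 1) = v k - d * padicValRat p (t k - 1) := by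
    simp only [hv, hrec k, padicValRat_div_sub_one_pow (ht0 k) (ht1 k)]
  have hvper : Periodic v n := fun k => by simp only [hv, hper k]
  have hnonneg (k : ℕ) : 0 ≤ v k := by
    by_contra! hk
    have hpos : 0 < v (k + 1) := by
      rw [hstep, padicValRat_sub_one_of_neg hk]
      have : (2 : ℤ) ≤ d := by exact_mod_cast hd
      nlinarith
    have hstay (j : ℕ) (hj : 0 < v j) : 0 < v (j + 1) := by
      rwa [hstep, padicValRat_sub_one_of_pos hj, mul_zero, sub_zero]
    exact hk.not_ge (hvper.forall_of_invariant hn (P := (0 < ·)) hstay hpos k).le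
  have hanti : Antitone v := antitone_nat_of_succ_le fun k => by
    rw [hstep]
    have := padicValRat_sub_one_nonneg (hnonneg k) (ht1 k)
    have : (0 : ℤ) ≤ d := by positivity
    nlinarith
  have hconst := hvper.succ_eq_of_antitone hn hanti k
  rw [hstep] at hconst
  simpa [show d ≠ 0 by omega] using hconst

theorem eq_two_of_periodic (hd : 2 ≤ d) (hn : 0 < n) (ht0 : ∀ k, t k ≠ 0) (ht1 : ∀ k, t k ≠ 1)
    (hrec : ∀ k, t (k + 1) = t k / (t k - 1) ^ d) (hper : Periodic t n) (k : ℕ) : t k = 2 := by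
  have hval (p : ℕ) (hp : p.Prime) : padicValRat p (t k - 1) = 0 :=
    haveI := Fact.mk hp
    padicValRat_sub_one_eq_zero_of_periodic p hd hn ht0 ht1 hrec hper k
  rcases Rat.eq_one_or_eq_neg_one_of_forall_padicValRat_eq_zero (sub_ne_zero.2 (ht1 k)) hval
    with h | h
  · linarith
  · exact absurd (by linarith) (ht0 k)

end Cycle

section Psi

variable {d : ℕ} {a b : ℚ}

theorem psi_some_of_ne {z : ℚ} (h : a * z ^ d + b ≠ 0) :
    psi d a b (some z) = some (z / (a * z ^ d + b)) :=
  if_neg h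

theorem isFixedPt_psi_some_zero (hd : d ≠ 0) (hb : b ≠ 0) : IsFixedPt (psi d a b) (some 0) := by
  simp [IsFixedPt, psi, zero_pow hd, hb]

theorem exists_orbit_of_iterate_ne_some_zero {P : Option ℚ}
    (h : ∀ m, (psi d a b)^[m] P ≠ some 0) :
    ∃ y : ℕ → ℚ, (∀ m, (psi d a b)^[m] P = some (y m)) ∧ (∀ m, y m ≠ 0) ∧
      ∀ m, a * y m ^ d + b ≠ 0 := by
  have hpt (m : ℕ) : ∃ w, (psi d a b)^[m] P = some w ∧ w ≠ 0 ∧ a * w ^ d + b ≠ 0 := by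
    match hm : (psi d a b)^[m] P with
    | none => exact absurd (by rw [iterate_succ_apply', hm]; rfl) (h (m + 1))
    | some w =>
      refine ⟨w, rfl, fun hw => h m (hw ▸ hm), fun hpole => h (m + 2) ?_⟩
      rw [iterate_succ_apply', iterate_succ_apply', hm]
      simp [psi, hpole]
  choose y hy using hpt
  exact ⟨y, fun m => (hy m).1, fun m => (hy m).2.1, fun m => (hy m).2.2⟩

end Psi

theorem isFixedPt_psi_neg_one_of_iterate_ne_some_zero {d n : ℕ} (hd : 2 ≤ d) (hn : 0 < n) {a : ℚ}
    (ha : a ≠ 0) {P : Option ℚ} (hPn : IsPeriodicPt (psi d a (-1)) n P)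
    (havoid : ∀ m, (psi d a (-1))^[m] P ≠ some 0) : IsFixedPt (psi d a (-1)) P := by
  obtain ⟨y, hPy, hy0, hpole⟩ := exists_orbit_of_iterate_ne_some_zero havoid
  have hrec (k : ℕ) : y (k + 1) = y k / (a * y k ^ d - 1) := by
    have h := hPy (k + 1)
    rw [iterate_succ_apply', hPy k, psi_some_of_ne (hpole k), ← sub_eq_add_neg] at h
    exact (Option.some.inj h).symm
  have hper : Periodic y n := fun k => Option.some.inj <| by
    rw [← hPy, ← hPy, iterate_add_apply, hPn]
  have htwo : a * y 0 ^ d = 2 := eq_two_of_periodic (t := fun k => a * y k ^ d) hd hn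
    (fun k => mul_ne_zero ha (pow_ne_zero _ (hy0 k)))
    (fun k => by simpa [← sub_eq_add_neg, sub_ne_zero] using hpole k)
    (fun k => by simp only [hrec k, div_pow, mul_div_assoc]) (fun k => by simp only [hper k]) 0
  have hP0 : P = some (y 0) := hPy 0
  rw [IsFixedPt, hP0, psi_some_of_ne (hpole 0), htwo]
  norm_num

/-- For `d ≥ 2` and a nonzero rational `a`, the map `ψ_{d,a,−1}`
has no rational periodic cycle of length `≥ 2`: every rational periodic point is
a fixed point. -/
theorem periodic_implies_fixed_psi_b_neg_one
    (d : ℕ) (hd : 2 ≤ d) (a : ℚ) (ha : a ≠ 0)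
    (P : Option ℚ) (hP : ∃ n : ℕ, 0 < n ∧ (psi d a (-1))^[n] P = P) :
    psi d a (-1) P = P := by
  obtain ⟨n, hn, hPn⟩ := hP
  have hfix0 : IsFixedPt (psi d a (-1)) (some 0) := isFixedPt_psi_some_zero (by omega) (by norm_num)
  by_cases hhit : ∃ m, (psi d a (-1))^[m] P = some 0
  · obtain ⟨m, hm⟩ := hhit
    rw [IsPeriodicPt.eq_of_iterate_eq hPn hn hfix0 hm]
    exact hfix0
  · push Not at hhit
    exact isFixedPt_psi_neg_one_of_iterate_ne_some_zero hd hn ha hPn hhit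
end

section
/- Fix a prime p, an even integer d ≥ 2, a nonzero rational a, and b = σ·p^e with σ ∈ {1, −1} and e ≥ 0 an integer. Then every rational periodic cycle of ψ_{d,a,b} on ℙ¹(ℚ) has length at most 2, and every rational periodic cycle of length 2 consists of two affine points z and −z for some z ∈ ℚ (i.e., ψ_{d,a,b}(z) = −z and ψ_{d,a,b}(−z) = z). -/
/-!
`∞ ↦ 0 ↦ 0`, so a periodic point other than `0` lies on a cycle `z₀ ↦ z₁ ↦ ⋯` of nonzero
rationals with `z_{i+1} = z_i / w_i`, `w_i = a z_i^d + b`. Since `d` is even,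
`u_i = |a| z_i^d > 0` satisfies `u_{i+1} = u_i / (u_i - c)^d` with `c = ∓b`, and it suffices to show `|u_i - c| = 1`, i.e.
`w_i = ±1`, i.e. `ψ(z_i) = ±z_i`. If `c < 0` then `u_i - c > 1` and `u` strictly decreases,
which is absurd; so let `c = p^e`. At a prime `q` with `v_q(c) = 0`, a negative `v_q(u_i)`
would make `v_q(u_{i+1}) = (1 - d) v_q(u_i)` positive, and positive valuations are never
changed again, contradicting periodicity; hence `v_q(u_i - c) ≥ 0`, and as these numbers
have sum zero along the cycle, they vanish. So `|u_i - c|` is a power of `p` and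
`u_i = M p^{v_p(u_i)}` with `M` independent of `i`. If some `v_p(u_j - c)` were negative,
then `M = p^k ± 1` with `k ≥ 2`, and following the orbit one or two more steps gives either
`M ≤ 2` or a second representation `M = p^l ± 1` with `l ≤ k - 2`, both impossible.
-/

open Function

namespace Function.Periodic

variable {α : Type*} {s : ℕ → α} {n : ℕ}

theorem succ_eq_of_succ_le [PartialOrder α] (hs : Periodic s n) (hn : 0 < n)
    (hle : ∀ i, s (i + 1) ≤ s i) (i : ℕ) : s (i + 1) = s i :=
  (hle i).antisymm <| calc
    s i = s (i + n) := (hs i).symm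
    _ ≤ s (i + 1) := antitone_nat_of_succ_le hle (by omega)

theorem forall_of_imp_succ (hs : Periodic s n) (hn : 0 < n) {P : α → Prop}
    (hP : ∀ i, P (s i) → P (s (i + 1))) {i : ℕ} (hi : P (s i)) (j : ℕ) : P (s j) := by
  have hforward : ∀ k, P (s (i + k)) := fun k => by
    induction k with
    | zero => exact hi
    | succ k ih => exact hP _ ih
  have hj : s (j + i * n) = s j := by simpa using hs.nat_mul i j
  have hin : i ≤ i * n := Nat.le_mul_of_pos_right i hn
  rw [← hj, show j + i * n = i + (j + i * n - i) by omega]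
  exact hforward _

end Function.Periodic

theorem Function.IsPeriodicPt.apply_eq_of_isFixedPt {α : Type*} {f : α → α} {x : α} {n : ℕ}
    (hx : IsPeriodicPt f n x) (hn : 0 < n) (hfx : IsFixedPt f (f x)) : f x = x :=
  (hx.eq_of_apply_eq_same (hfx.isPeriodicPt n) hn hfx.symm).symm

theorem Rat.eq_one_of_forall_padicValRat_eq_zero {y : ℚ} (hy : 0 < y)
    (h : ∀ q : ℕ, q.Prime → padicValRat q y = 0) : y = 1 := by
  have hnum0 : y.num.natAbs ≠ 0 := by simpa using hy.ne'
  have hndvd : ∀ q : ℕ, q.Prime → ¬ q ∣ y.num.natAbs ∧ ¬ q ∣ y.den := by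
    intro q hq
    have := Fact.mk hq
    have hv := h q hq
    rw [padicValRat_def, padicValInt] at hv
    have hboth : ¬ (q ∣ y.num.natAbs ∧ q ∣ y.den) := fun ⟨h1, h2⟩ =>
      hq.one_lt.ne' ((Nat.Coprime.coprime_dvd_left h1 y.reduced).eq_one_of_dvd h2)
    constructor <;> intro hdvd
    · have := one_le_padicValNat_of_dvd hnum0 hdvd
      rw [padicValNat.eq_zero_of_not_dvd fun h2 => hboth ⟨hdvd, h2⟩] at hv
      omega
    · have := one_le_padicValNat_of_dvd y.den_nz hdvd
      rw [padicValNat.eq_zero_of_not_dvd fun h1 => hboth ⟨h1, hdvd⟩] at hv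
      omega
  have hden : y.den = 1 := Nat.eq_one_iff_not_exists_prime_dvd.2 fun q hq => (hndvd q hq).2
  have hnum : y.num.natAbs = 1 := Nat.eq_one_iff_not_exists_prime_dvd.2 fun q hq => (hndvd q hq).1
  have hnum' : y.num = 1 := by have := Rat.num_pos.2 hy; omega
  rw [← y.num_div_den, hnum', hden]; norm_num

theorem abs_eq_zpow_padicValRat {p : ℕ} [hp : Fact p.Prime] {x : ℚ} (hx : x ≠ 0)
    (h : ∀ q : ℕ, q.Prime → q ≠ p → padicValRat q x = 0) :
    |x| = (p : ℚ) ^ padicValRat p x := by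
  have hp0 : (p : ℚ) ≠ 0 := by exact_mod_cast hp.out.ne_zero
  suffices |x| / (p : ℚ) ^ padicValRat p x = 1 by
    rwa [div_eq_one_iff_eq (zpow_ne_zero _ hp0)] at this
  refine Rat.eq_one_of_forall_padicValRat_eq_zero (by positivity) fun q hq => ?_
  have := Fact.mk hq
  have habs : padicValRat q |x| = padicValRat q x := by
    rcases abs_choice x with h' | h' <;> rw [h']
    exact padicValRat.neg x
  rw [padicValRat.div (abs_ne_zero.2 hx) (zpow_ne_zero _ hp0), habs, padicValRat.zpow]
  rcases eq_or_ne q p with rfl | hqp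
  · rw [padicValRat.self hp.out.one_lt, mul_one, sub_self]
  · rw [h q hq hqp, padicValRat.of_nat, padicValNat_primes hqp]; simp

section Valuation

variable {p : ℕ} [hp : Fact p.Prime] {e : ℕ} {x c M : ℚ}

theorem padicValRat_sub_eq_min (hx : x ≠ 0) (hc : c ≠ 0)
    (hne : padicValRat p x ≠ padicValRat p c) :
    padicValRat p (x - c) = min (padicValRat p x) (padicValRat p c) := by
  have hsub : x - c ≠ 0 := fun h => hne (by rw [sub_eq_zero.1 h])
  rw [sub_eq_add_neg, padicValRat.add_eq_min (by rwa [← sub_eq_add_neg]) hx (neg_ne_zero.2 hc)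
    (by rwa [padicValRat.neg]), padicValRat.neg]

theorem min_le_padicValRat_sub (hxc : x - c ≠ 0) :
    min (padicValRat p x) (padicValRat p c) ≤ padicValRat p (x - c) := by
  have := padicValRat.min_le_padicValRat_add (p := p) (q := x) (r := -c)
    (by rwa [← sub_eq_add_neg])
  rwa [padicValRat.neg, ← sub_eq_add_neg] at this

theorem padicValRat_prime_pow (e : ℕ) : padicValRat p ((p : ℚ) ^ e) = e := by
  rw [padicValRat.pow, padicValRat.self hp.out.one_lt, mul_one]

theorem abs_sub_zpow_eq_one_of_padicValRat_lt (hM : 0 < M)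
    (hx : x = M * (p : ℚ) ^ padicValRat p x) (hlt : padicValRat p x < e)
    (habs : |x - (p : ℚ) ^ e| = (p : ℚ) ^ padicValRat p (x - (p : ℚ) ^ e)) :
    |M - (p : ℚ) ^ ((e : ℤ) - padicValRat p x)| = 1 := by
  have hP : (p : ℚ) ≠ 0 := by exact_mod_cast hp.out.ne_zero
  have hx0 : x ≠ 0 := by rw [hx]; positivity
  rw [padicValRat_sub_eq_min hx0 (pow_ne_zero _ hP) (by rw [padicValRat_prime_pow]; omega),
    padicValRat_prime_pow, min_eq_left hlt.le] at habs
  set V := padicValRat p x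
  have hPV : (0 : ℚ) < (p : ℚ) ^ V := by positivity
  have hfac : x - (p : ℚ) ^ e = (M - (p : ℚ) ^ ((e : ℤ) - V)) * (p : ℚ) ^ V := by
    rw [sub_mul, ← zpow_add₀ hP, sub_add_cancel, zpow_natCast, ← hx]
  rw [hfac, abs_mul, abs_of_pos hPV] at habs
  exact mul_right_cancel₀ hPV.ne' (habs.trans (one_mul _).symm)

theorem le_two_of_lt_padicValRat (hM : 0 < M)
    (hx : x = M * (p : ℚ) ^ padicValRat p x) (hgt : e < padicValRat p x)
    (habs : |x - (p : ℚ) ^ e| = (p : ℚ) ^ padicValRat p (x - (p : ℚ) ^ e)) : M ≤ 2 := by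
  have hP : (p : ℚ) ≠ 0 := by exact_mod_cast hp.out.ne_zero
  have hx0 : x ≠ 0 := by rw [hx]; positivity
  rw [padicValRat_sub_eq_min hx0 (pow_ne_zero _ hP) (by rw [padicValRat_prime_pow]; omega),
    padicValRat_prime_pow, min_eq_right hgt.le, zpow_natCast] at habs
  set V := padicValRat p x
  have hPe : (0 : ℚ) < (p : ℚ) ^ e := by positivity
  have hfac : x - (p : ℚ) ^ e = (M * (p : ℚ) ^ (V - e) - 1) * (p : ℚ) ^ e := by
    rw [sub_mul, one_mul, mul_assoc, ← zpow_natCast, ← zpow_add₀ hP, sub_add_cancel, ← hx]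
  rw [hfac, abs_mul, abs_of_pos hPe] at habs
  have h2 := (abs_le.1 (mul_right_cancel₀ hPe.ne' (habs.trans (one_mul _).symm)).le).2
  have h3 : (1 : ℚ) ≤ (p : ℚ) ^ (V - e) :=
    one_le_zpow₀ (by exact_mod_cast hp.out.one_lt.le) (by omega)
  nlinarith

end Valuation

theorem lt_add_two_of_abs_sub_zpow_eq_one {r M : ℚ} (hr : 2 ≤ r) {k l : ℤ} (hl : 0 ≤ l)
    (hk : |M - r ^ k| = 1) (hl' : |M - r ^ l| = 1) : k < l + 2 := by
  by_contra! hlk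
  have h1 : (1 : ℚ) ≤ r ^ l := one_le_zpow₀ (by linarith) hl
  have h2 : r ^ (l + 2) ≤ r ^ k := zpow_le_zpow_right₀ (by linarith) hlk
  rw [zpow_add₀ (by positivity), zpow_two] at h2
  have := abs_le.1 hk.le
  have := abs_le.1 hl'.le
  nlinarith [mul_le_mul_of_nonneg_left (show (4 : ℚ) ≤ r * r by nlinarith)
    (show 0 ≤ r ^ l by linarith)]

structure IsPosCycle (c : ℚ) (d n : ℕ) (u : ℕ → ℚ) : Prop where
  period_pos : 0 < n
  periodic : Periodic u n
  pos : ∀ i, 0 < u i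
  succ : ∀ i, u (i + 1) = u i / (u i - c) ^ d

namespace IsPosCycle

variable {c : ℚ} {d n : ℕ} {u : ℕ → ℚ}

theorem sub_ne_zero (hu : IsPosCycle c d n u) (hd : d ≠ 0) (i : ℕ) : u i - c ≠ 0 := by
  intro h
  have := hu.succ i
  rw [h, zero_pow hd, div_zero] at this
  exact (hu.pos (i + 1)).ne' this

theorem neg_one_lt (hu : IsPosCycle c d n u) (hd : d ≠ 0) : -1 < c := by
  by_contra! hc
  have hlt : ∀ i, u (i + 1) < u i := fun i => by
    rw [hu.succ i]
    exact div_lt_self (hu.pos i) (one_lt_pow₀ (by linarith [hu.pos i]) hd)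
  exact (hlt 0).ne (hu.periodic.succ_eq_of_succ_le hu.period_pos (fun i => (hlt i).le) 0)

theorem padicValRat_succ (hu : IsPosCycle c d n u) (hd : d ≠ 0) (q : ℕ) [Fact q.Prime] (i : ℕ) :
    padicValRat q (u (i + 1)) = padicValRat q (u i) - d * padicValRat q (u i - c) := by
  rw [hu.succ i, padicValRat.div (hu.pos i).ne' (pow_ne_zero _ (hu.sub_ne_zero hd i)),
    padicValRat.pow]

theorem padicValRat_sub_eq_zero_of_nonneg (hu : IsPosCycle c d n u) (hd : d ≠ 0) (q : ℕ)
    [Fact q.Prime] (hnonneg : ∀ i, 0 ≤ padicValRat q (u i - c)) (i : ℕ) :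
    padicValRat q (u i - c) = 0 := by
  have hV := (hu.periodic.comp (padicValRat q)).succ_eq_of_succ_le hu.period_pos
    (fun j => by simp only [comp_apply, hu.padicValRat_succ hd q j]; nlinarith [hnonneg j]) i
  simp only [comp_apply, hu.padicValRat_succ hd q i] at hV
  simpa [hd] using hV

theorem padicValRat_sub_eq_zero (hu : IsPosCycle c d n u) (hd : 2 ≤ d) (q : ℕ) [Fact q.Prime]
    (hc0 : c ≠ 0) (hc : padicValRat q c = 0) (i : ℕ) : padicValRat q (u i - c) = 0 := by
  have hsucc := hu.padicValRat_succ (by omega) q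
  have hmin : ∀ i, padicValRat q (u i) ≠ 0 →
      padicValRat q (u i - c) = min (padicValRat q (u i)) 0 := fun i hi => by
    rw [padicValRat_sub_eq_min (hu.pos i).ne' hc0 (by rwa [hc]), hc]
  have hpos : ∀ i, 0 < padicValRat q (u i) → 0 < padicValRat q (u (i + 1)) := fun i hi => by
    rw [hsucc, hmin i hi.ne', min_eq_right hi.le]; simpa using hi
  have hnonneg : ∀ i, 0 ≤ padicValRat q (u i) := fun i => by
    by_contra! hi
    have hi1 : 0 < padicValRat q (u (i + 1)) := by
      rw [hsucc, hmin i hi.ne, min_eq_left hi.le]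
      have : (2 : ℤ) ≤ d := by exact_mod_cast hd
      nlinarith
    exact hi.not_ge
      (hu.periodic.comp (padicValRat q) |>.forall_of_imp_succ hu.period_pos hpos hi1 i).le
  refine hu.padicValRat_sub_eq_zero_of_nonneg (by omega) q (fun i => ?_) i
  have := min_le_padicValRat_sub (p := q) (hu.sub_ne_zero (by omega) i)
  rwa [hc, min_eq_right (hnonneg i)] at this

theorem exists_eq_mul_zpow (hu : IsPosCycle c d n u) (hd : d ≠ 0) (p : ℕ) [hp : Fact p.Prime]
    (habs : ∀ i, |u i - c| = (p : ℚ) ^ padicValRat p (u i - c)) :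
    ∃ M : ℚ, 0 < M ∧ ∀ i, u i = M * (p : ℚ) ^ padicValRat p (u i) := by
  have hP : (p : ℚ) ≠ 0 := by exact_mod_cast hp.out.ne_zero
  have hpow : ∀ i, (u i - c) ^ d = (p : ℚ) ^ (d * padicValRat p (u i - c)) := fun i => by
    have hpos : 0 < (u i - c) ^ d := by
      have := hu.pos (i + 1)
      rw [hu.succ i] at this
      exact (div_pos_iff_of_pos_left (hu.pos i)).1 this
    rw [← abs_of_pos hpos, abs_pow, habs i, ← zpow_natCast, ← zpow_mul, mul_comm]
  have hstep : ∀ i, u (i + 1) / (p : ℚ) ^ padicValRat p (u (i + 1)) =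
      u i / (p : ℚ) ^ padicValRat p (u i) := fun i => by
    rw [hu.padicValRat_succ hd p i, hu.succ i, hpow, zpow_sub₀ hP]
    field_simp
  have hconst : ∀ i, u i / (p : ℚ) ^ padicValRat p (u i) = u 0 / (p : ℚ) ^ padicValRat p (u 0) :=
    fun i => by
      induction i with
      | zero => rfl
      | succ i ih => rw [hstep, ih]
  refine ⟨u 0 / (p : ℚ) ^ padicValRat p (u 0), div_pos (hu.pos 0) (by positivity), fun i => ?_⟩
  rw [← hconst i, div_mul_cancel₀ _ (zpow_ne_zero _ hP)]

section PrimePower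

variable {p e : ℕ} [hp : Fact p.Prime]

theorem padicValRat_lt_of_three_le (hu : IsPosCycle ((p : ℚ) ^ e) d n u) (hd : 2 ≤ d)
    (he : 1 ≤ e)
    (habs : ∀ i, |u i - (p : ℚ) ^ e| = (p : ℚ) ^ padicValRat p (u i - (p : ℚ) ^ e))
    {M : ℚ} (hM : ∀ i, u i = M * (p : ℚ) ^ padicValRat p (u i)) (hM3 : 3 ≤ M) (i : ℕ) :
    padicValRat p (u i) < e := by
  set τ := padicValRat p (u i - (p : ℚ) ^ e)
  have hP : (p : ℚ) ≠ 0 := by exact_mod_cast hp.out.ne_zero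
  have hPe : (0 : ℚ) < (p : ℚ) ^ e := by positivity
  rcases lt_trichotomy (padicValRat p (u i)) e with hlt | heq | hgt
  · exact hlt
  · -- `M - 1 = p ^ s` with `s ≥ 1`, while the next step gives `M = p ^ k ± 1` with `k ≥ s + 2`
    have hfac : u i - (p : ℚ) ^ e = (M - 1) * (p : ℚ) ^ e := by
      rw [hM i, heq, zpow_natCast]; ring
    have hs : M - 1 = (p : ℚ) ^ (τ - e) := by
      have h1 : |u i - (p : ℚ) ^ e| = (p : ℚ) ^ τ := habs i
      rw [hfac, abs_mul, abs_of_pos hPe, abs_of_pos (by linarith)] at h1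
      rw [zpow_sub₀ hP, ← h1, zpow_natCast, mul_div_cancel_right₀ _ hPe.ne']
    have hs1 : 1 ≤ τ - e := by
      by_contra! h
      have : (p : ℚ) ^ (τ - e) ≤ 1 :=
        zpow_le_one_of_nonpos₀ (by exact_mod_cast hp.out.one_lt.le) (by omega)
      linarith
    have hsucc := hu.padicValRat_succ (by omega) p i
    have hd' : (2 : ℤ) ≤ d := by exact_mod_cast hd
    have hlt : padicValRat p (u (i + 1)) < e := by rw [hsucc, heq]; nlinarith
    have := lt_add_two_of_abs_sub_zpow_eq_one (by exact_mod_cast hp.out.two_le) (by omega)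
      (abs_sub_zpow_eq_one_of_padicValRat_lt (by linarith) (hM (i + 1)) hlt (habs (i + 1)))
      (show |M - (p : ℚ) ^ (τ - e)| = 1 by rw [← hs]; norm_num)
    rw [hsucc, heq] at this
    nlinarith
  · linarith [le_two_of_lt_padicValRat (by linarith) (hM i) hgt (habs i)]

theorem padicValRat_sub_pow_nonneg (hu : IsPosCycle ((p : ℚ) ^ e) d n u) (hd : 2 ≤ d)
    (he : 1 ≤ e)
    (habs : ∀ i, |u i - (p : ℚ) ^ e| = (p : ℚ) ^ padicValRat p (u i - (p : ℚ) ^ e)) (j : ℕ) :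
    0 ≤ padicValRat p (u j - (p : ℚ) ^ e) := by
  obtain ⟨M, hM0, hM⟩ := hu.exists_eq_mul_zpow (by omega) p habs
  have hP2 : (2 : ℚ) ≤ p := by exact_mod_cast hp.out.two_le
  by_contra! hneg
  have hVj : padicValRat p (u j) < 0 := by
    have := min_le_padicValRat_sub (p := p) (hu.sub_ne_zero (by omega) j)
    rw [padicValRat_prime_pow] at this
    omega
  -- `M = p ^ k ± 1` with `k = e - v_p (u j) ≥ 2`
  have hMk := abs_sub_zpow_eq_one_of_padicValRat_lt hM0 (hM j) (by omega) (habs j)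
  have hM3 : 3 ≤ M := by
    have : (p : ℚ) ^ (2 : ℤ) ≤ (p : ℚ) ^ ((e : ℤ) - padicValRat p (u j)) :=
      zpow_le_zpow_right₀ (by linarith) (by omega)
    rw [zpow_two] at this
    nlinarith [(abs_le.1 hMk.le).1]
  have hsucc : 1 ≤ padicValRat p (u (j + 1)) := by
    rw [hu.padicValRat_succ (by omega) p j, padicValRat_sub_eq_min (hu.pos j).ne'
      (pow_ne_zero _ (by exact_mod_cast hp.out.ne_zero)) (by rw [padicValRat_prime_pow]; omega),
      padicValRat_prime_pow, min_eq_left (by omega)]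
    have hd' : (2 : ℤ) ≤ d := by exact_mod_cast hd
    nlinarith
  have hlt := hu.padicValRat_lt_of_three_le hd he habs hM hM3 (j + 1)
  have := lt_add_two_of_abs_sub_zpow_eq_one hP2 (by omega) hMk
    (abs_sub_zpow_eq_one_of_padicValRat_lt hM0 (hM (j + 1)) hlt (habs (j + 1)))
  omega

theorem abs_sub_eq_one (hu : IsPosCycle c d n u) (hd : 2 ≤ d) (hc : |c| = (p : ℚ) ^ e)
    (i : ℕ) : |u i - c| = 1 := by
  have hP1 : (1 : ℚ) ≤ (p : ℚ) ^ e := one_le_pow₀ (by exact_mod_cast hp.out.one_lt.le)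
  rcases lt_or_ge c 0 with hneg | hnonneg
  · rw [abs_of_neg hneg] at hc
    linarith [hu.neg_one_lt (by omega)]
  rw [abs_of_nonneg hnonneg] at hc
  subst hc
  have hc0 : (p : ℚ) ^ e ≠ 0 := by positivity
  have hq : ∀ q : ℕ, q.Prime → q ≠ p → ∀ i, padicValRat q (u i - (p : ℚ) ^ e) = 0 :=
    fun q hq hqp => by
      have := Fact.mk hq
      refine hu.padicValRat_sub_eq_zero hd q hc0 ?_
      rw [padicValRat.pow, padicValRat.of_nat, padicValNat_primes hqp]; simp
  have habs : ∀ i, |u i - (p : ℚ) ^ e| = (p : ℚ) ^ padicValRat p (u i - (p : ℚ) ^ e) :=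
    fun i => abs_eq_zpow_padicValRat (hu.sub_ne_zero (by omega) i) fun q hq' hqp => hq q hq' hqp i
  have hp0 : padicValRat p (u i - (p : ℚ) ^ e) = 0 := by
    rcases Nat.eq_zero_or_pos e with rfl | he
    · exact hu.padicValRat_sub_eq_zero hd p (by simp) (by simp) i
    · exact hu.padicValRat_sub_eq_zero_of_nonneg (by omega) p
        (hu.padicValRat_sub_pow_nonneg hd he habs) i
  rw [habs i, hp0, zpow_zero]

end PrimePower

end IsPosCycle

/-- `ψ` on the affine chart. At a pole it returns `z / 0 = 0` rather than `∞`; this is harmless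
on cycles, since `0` is a fixed point. -/
def psiChart (d : ℕ) (a b : ℚ) (z : ℚ) : ℚ := z / (a * z ^ d + b)

theorem psiChart_eq_or_eq_neg {p e d n : ℕ} [Fact p.Prime] {a b z : ℚ} (hd : 2 ≤ d)
    (heven : Even d) (ha : a ≠ 0) (hb : |b| = (p : ℚ) ^ e)
    (hz : IsPeriodicPt (psiChart d a b) n z) (hn : 0 < n) :
    psiChart d a b z = z ∨ psiChart d a b z = -z := by
  set g := psiChart d a b with hg
  rcases eq_or_ne z 0 with rfl | hz0
  · simp [hg, psiChart]
  have hiter0 : ∀ i, g^[i] z ≠ 0 := fun i => by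
    induction i with
    | zero => exact hz0
    | succ i ih =>
      rw [iterate_succ_apply']
      intro h0
      have hfix : IsFixedPt g (g (g^[i] z)) := by rw [h0]; simp [hg, psiChart, IsFixedPt]
      exact ih ((hz.apply_iterate i).apply_eq_of_isFixedPt hn hfix ▸ h0)
  obtain ⟨ε, c, hε, hc, hw⟩ : ∃ ε c : ℚ, |ε| = 1 ∧ |c| = (p : ℚ) ^ e ∧
      ∀ x, a * x ^ d + b = ε * (|a| * x ^ d - c) := by
    rcases ha.lt_or_gt with h | h
    · exact ⟨-1, b, by simp, hb, fun x => by rw [abs_of_neg h]; ring⟩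
    · exact ⟨1, -b, by simp, by rwa [abs_neg], fun x => by rw [abs_of_pos h]; ring⟩
  have hu : IsPosCycle c d n (fun i => |a| * (g^[i] z) ^ d) := by
    refine ⟨hn, fun i => ?_, fun i => mul_pos (abs_pos.2 ha) (heven.pow_pos (hiter0 i)),
      fun i => ?_⟩
    · simp only [iterate_add_apply, hz.eq]
    · rw [iterate_succ_apply', hg, psiChart, div_pow, hw, mul_pow, ← heven.pow_abs ε, hε,
        one_pow, one_mul, mul_div_assoc]
  have h1 := hu.abs_sub_eq_one hd hc 0
  simp only [iterate_zero_apply] at h1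
  have : a * z ^ d + b = 1 ∨ a * z ^ d + b = -1 := by
    rw [← abs_eq zero_le_one, hw, abs_mul, hε, one_mul, h1]
  rcases this with h | h
  · simp [hg, psiChart, h]
  · simp [hg, psiChart, h, div_neg]

section Psi

variable {d : ℕ} {a b : ℚ}

theorem psi_some_of_ne_none {z : ℚ} (h : psi d a b (some z) ≠ none) :
    psi d a b (some z) = some (psiChart d a b z) := by
  simp only [psi] at h ⊢
  split_ifs at h ⊢
  · exact absurd rfl h
  · rfl

theorem psi_some_neg (heven : Even d) (z : ℚ) :
    psi d a b (some (-z)) = (psi d a b (some z)).map Neg.neg := by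
  simp only [psi, heven.neg_pow]
  split_ifs <;> simp [neg_div]

theorem exists_psiChart_of_isPeriodicPt (hd : d ≠ 0) (hb : b ≠ 0) {n : ℕ} {P : Option ℚ}
    (hP : IsPeriodicPt (psi d a b) n P) (hn : 0 < n) :
    ∃ z, P = some z ∧ psi d a b P = some (psiChart d a b z) ∧
      IsPeriodicPt (psiChart d a b) n z := by
  have hne : ∀ {x}, IsPeriodicPt (psi d a b) n x → x ≠ none := by
    rintro x hx rfl
    have hfix : IsFixedPt (psi d a b) (psi d a b none) := by simp [IsFixedPt, psi, hd, hb]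
    simpa [psi] using hx.apply_eq_of_isFixedPt hn hfix
  obtain ⟨z, rfl⟩ := Option.ne_none_iff_exists'.1 (hne hP)
  have hiter : ∀ i, (psi d a b)^[i] (some z) = some ((psiChart d a b)^[i] z) := fun i => by
    induction i with
    | zero => rfl
    | succ i ih =>
      have hsucc := hne (hP.apply_iterate (i + 1))
      rw [iterate_succ_apply', ih] at hsucc ⊢
      rw [iterate_succ_apply']
      exact psi_some_of_ne_none hsucc
  exact ⟨z, rfl, hiter 1, Option.some_injective _ ((hiter n).symm.trans hP)⟩

theorem isFixedPt_or_psi_eq_neg_of_isPeriodicPt {p e n : ℕ} [Fact p.Prime] (hd : 2 ≤ d)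
    (heven : Even d) (ha : a ≠ 0) (hb : |b| = (p : ℚ) ^ e) {P : Option ℚ}
    (hP : IsPeriodicPt (psi d a b) n P) (hn : 0 < n) :
    IsFixedPt (psi d a b) P ∨
      ∃ z, P = some z ∧ psi d a b (some z) = some (-z) ∧ psi d a b (some (-z)) = some z := by
  have hb0 : b ≠ 0 := by
    rw [← abs_pos, hb]
    exact pow_pos (Nat.cast_pos.2 (Fact.out : p.Prime).pos) e
  obtain ⟨z, rfl, hψ, hz⟩ := exists_psiChart_of_isPeriodicPt (by omega) hb0 hP hn
  rcases psiChart_eq_or_eq_neg hd heven ha hb hz hn with h | h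
  · exact .inl (by rw [IsFixedPt, hψ, h])
  · refine .inr ⟨z, rfl, by rw [hψ, h], ?_⟩
    rw [psi_some_neg heven, hψ, h, Option.map_some, neg_neg]

end Psi

/-- Fix a prime `p`, an even integer `d ≥ 2`, a nonzero rational `a`,
and `b = σ·p^e` with `σ ∈ {1,−1}` and `e ≥ 0`. Then every rational periodic cycle of
`ψ_{d,a,b}` has length at most `2`, and every cycle of length `2` consists of two
affine points `z` and `−z` (so `ψ(z) = −z` and `ψ(−z) = z`). -/
theorem periodic_cycles_even_degree
    (p : ℕ) (hp : p.Prime) (d : ℕ) (hd : 2 ≤ d) (heven : Even d)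
    (a : ℚ) (ha : a ≠ 0) (σ : ℚ) (hσ : σ = 1 ∨ σ = -1) (e : ℕ)
    (b : ℚ) (hb : b = σ * (p : ℚ) ^ e) :
    (∀ P : Option ℚ, (∃ n : ℕ, 0 < n ∧ (psi d a b)^[n] P = P) →
      Function.minimalPeriod (psi d a b) P = 1 ∨
        Function.minimalPeriod (psi d a b) P = 2) ∧
    (∀ P : Option ℚ, Function.minimalPeriod (psi d a b) P = 2 →
      ∃ z : ℚ, P = some z ∧ psi d a b (some z) = some (-z) ∧
        psi d a b (some (-z)) = some z) := by
  have := Fact.mk hp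
  have hb' : |b| = (p : ℚ) ^ e := by rcases hσ with rfl | rfl <;> simp [hb]
  have hcycle {n : ℕ} {P : Option ℚ} (hP : IsPeriodicPt (psi d a b) n P) (hn : 0 < n) :=
    isFixedPt_or_psi_eq_neg_of_isPeriodicPt hd heven ha hb' hP hn
  refine ⟨fun P ⟨n, hn, hP⟩ => ?_, fun P hP2 => ?_⟩
  · have h2 : IsPeriodicPt (psi d a b) 2 P := by
      rcases hcycle hP hn with hfix | ⟨z, rfl, h1, h2⟩
      · exact hfix.isPeriodicPt 2
      · simp only [IsPeriodicPt, IsFixedPt, iterate_succ_apply, iterate_zero_apply, h1, h2]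
    exact (Nat.dvd_prime Nat.prime_two).1 h2.minimalPeriod_dvd
  · have hper : IsPeriodicPt (psi d a b) 2 P := hP2 ▸ isPeriodicPt_minimalPeriod _ _
    rcases hcycle hper two_pos with hfix | hneg
    · rw [minimalPeriod_eq_one_iff_isFixedPt.2 hfix] at hP2
      cases hP2
    · exact hneg
end
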